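/- arXiv:math/0603424 — 2 statements merged into one kernel-verified Lean document; each statement's English description precedes it below -/
import Mathlib

section
/- The function φ₇(p,q) = q²/(1 + p²) − p·arctan(p) satisfies the equation (1 + p²)φ_pp + 2pq·φ_pq + (1 + q²)φ_qq = 0 for all real p, q. -/
noncomputable def pd₁ (f : ℝ → ℝ → ℝ) : ℝ → ℝ → ℝ := fun p q => deriv (fun x => f x q) p
noncomputable def pd₂ (f : ℝ → ℝ → ℝ) : ℝ → ℝ → ℝ := fun p q => deriv (fun y => f p y) q

open Real

theorem pd₁_eq_of_hasDerivAt {f f' : ℝ → ℝ → ℝ}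
    (h : ∀ p q, HasDerivAt (fun x => f x q) (f' p q) p) : pd₁ f = f' :=
  funext₂ fun p q => (h p q).deriv

theorem pd₂_eq_of_hasDerivAt {f f' : ℝ → ℝ → ℝ}
    (h : ∀ p q, HasDerivAt (fun y => f p y) (f' p q) q) : pd₂ f = f' :=
  funext₂ fun p q => (h p q).deriv

namespace LegendrePhi

noncomputable def phi (a b : ℝ) : ℝ := b ^ 2 / (1 + a ^ 2) - a * arctan a

theorem one_add_sq_ne_zero (a : ℝ) : 1 + a ^ 2 ≠ 0 := by positivity

theorem hasDerivAt_one_add_sq (a : ℝ) : HasDerivAt (fun x => 1 + x ^ 2) (2 * a) a := by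
  simpa using (hasDerivAt_pow 2 a).const_add 1

theorem pd₂_phi : pd₂ phi = fun a b => 2 * b / (1 + a ^ 2) :=
  pd₂_eq_of_hasDerivAt fun p q =>
    (((hasDerivAt_pow 2 q).div_const (1 + p ^ 2)).sub_const (p * arctan p)).congr_deriv
      (by ring)

theorem pd₁_phi :
    pd₁ phi = fun a b => -(2 * a * b ^ 2) / (1 + a ^ 2) ^ 2 - arctan a - a / (1 + a ^ 2) :=
  pd₁_eq_of_hasDerivAt fun p q =>
    (((hasDerivAt_const p (q ^ 2)).div (hasDerivAt_one_add_sq p) (one_add_sq_ne_zero p)).sub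
      ((hasDerivAt_id' p).mul (hasDerivAt_arctan p))).congr_deriv
      (by field_simp [one_add_sq_ne_zero p]; ring)

theorem pd₁_pd₁_phi :
    pd₁ (pd₁ phi) = fun a b => (6 * a ^ 2 - 2) * b ^ 2 / (1 + a ^ 2) ^ 3 - 2 / (1 + a ^ 2) ^ 2 := by
  rw [pd₁_phi]
  refine pd₁_eq_of_hasDerivAt fun p q => ?_
  have hsq := hasDerivAt_one_add_sq p
  have hne := one_add_sq_ne_zero p
  exact ((((hasDerivAt_id' p).const_mul 2).mul_const (q ^ 2)).neg.div (hsq.pow 2)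
      (pow_ne_zero 2 hne)).sub (hasDerivAt_arctan p) |>.sub ((hasDerivAt_id' p).div hsq hne)
      |>.congr_deriv (by simp only [Pi.neg_apply, Pi.pow_apply]; field_simp; ring)

theorem pd₁_pd₂_phi : pd₁ (pd₂ phi) = fun a b => -(4 * a * b) / (1 + a ^ 2) ^ 2 := by
  rw [pd₂_phi]
  exact pd₁_eq_of_hasDerivAt fun p q =>
    ((hasDerivAt_const p (2 * q)).div (hasDerivAt_one_add_sq p)
      (one_add_sq_ne_zero p)).congr_deriv (by ring)

theorem pd₂_pd₂_phi : pd₂ (pd₂ phi) = fun a _ => 2 / (1 + a ^ 2) := by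
  rw [pd₂_phi]
  exact pd₂_eq_of_hasDerivAt fun p q =>
    (((hasDerivAt_id' q).const_mul 2).div_const (1 + p ^ 2)).congr_deriv (by simp)

end LegendrePhi

open LegendrePhi in
theorem phi_solves_legendre_eq :
    ∀ p q : ℝ,
      (1 + p ^ 2) * pd₁ (pd₁ (fun a b => b ^ 2 / (1 + a ^ 2) - a * Real.arctan a)) p q
        + 2 * p * q * pd₁ (pd₂ (fun a b => b ^ 2 / (1 + a ^ 2) - a * Real.arctan a)) p q
        + (1 + q ^ 2) * pd₂ (pd₂ (fun a b => b ^ 2 / (1 + a ^ 2) - a * Real.arctan a)) p q = 0 := by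
  intro p q
  change (1 + p ^ 2) * pd₁ (pd₁ phi) p q + 2 * p * q * pd₁ (pd₂ phi) p q
    + (1 + q ^ 2) * pd₂ (pd₂ phi) p q = 0
  rw [pd₁_pd₁_phi, pd₁_pd₂_phi, pd₂_pd₂_phi]
  field_simp [one_add_sq_ne_zero p]
  ring
end

section
/- If φ(p,q) is a sufficiently smooth solution of (1 + p²)φ_pp + 2pq·φ_pq + (1 + q²)φ_qq = 0 on ℝ², then ψ(p,q) = −p·φ + (1 + p²)·φ_p + pq·φ_q is also a solution of the same equation. -/
/-! The Legendre-transformed minimal surface operator `L` and the recursion `R` satisfy the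
intertwining identity `L (R φ) = R (L φ) + 2 p L φ` for every `C³` function `φ`: both sides expand
to the same combination of partial derivatives of order at most three once mixed partials are
identified. Hence `L φ = 0` forces `L (R φ) = 0`. -/

section PartialDerivatives

variable {f g : ℝ → ℝ → ℝ} {p q : ℝ}

theorem pd₁_eq_fderiv (hf : DifferentiableAt ℝ (fun z : ℝ × ℝ => f z.1 z.2) (p, q)) :
    pd₁ f p q = fderiv ℝ (fun z : ℝ × ℝ => f z.1 z.2) (p, q) (1, 0) :=
  HasDerivAt.deriv <|
    hf.hasFDerivAt.comp_hasDerivAt (f := fun x => (x, q)) p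
      ((hasDerivAt_id' p).prodMk (hasDerivAt_const p q))

theorem pd₂_eq_fderiv (hf : DifferentiableAt ℝ (fun z : ℝ × ℝ => f z.1 z.2) (p, q)) :
    pd₂ f p q = fderiv ℝ (fun z : ℝ × ℝ => f z.1 z.2) (p, q) (0, 1) :=
  HasDerivAt.deriv <|
    hf.hasFDerivAt.comp_hasDerivAt (f := fun y => (p, y)) q
      ((hasDerivAt_const q p).prodMk (hasDerivAt_id' q))

theorem contDiff_pd₁ {n : WithTop ℕ∞} (hf : ContDiff ℝ (n + 1) (fun z : ℝ × ℝ => f z.1 z.2)) :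
    ContDiff ℝ n (fun z : ℝ × ℝ => pd₁ f z.1 z.2) := by
  obtain ⟨hdiff, -, hfderiv⟩ := contDiff_succ_iff_fderiv.1 hf
  simpa only [pd₁_eq_fderiv (hdiff _)] using hfderiv.clm_apply contDiff_const

theorem contDiff_pd₂ {n : WithTop ℕ∞} (hf : ContDiff ℝ (n + 1) (fun z : ℝ × ℝ => f z.1 z.2)) :
    ContDiff ℝ n (fun z : ℝ × ℝ => pd₂ f z.1 z.2) := by
  obtain ⟨hdiff, -, hfderiv⟩ := contDiff_succ_iff_fderiv.1 hf
  simpa only [pd₂_eq_fderiv (hdiff _)] using hfderiv.clm_apply contDiff_const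

theorem pd₂_pd₁ (hf : ContDiff ℝ 2 (fun z : ℝ × ℝ => f z.1 z.2)) : pd₂ (pd₁ f) = pd₁ (pd₂ f) := by
  funext p q
  set F := fun z : ℝ × ℝ => f z.1 z.2
  have hF : Differentiable ℝ F := hf.differentiable two_ne_zero
  have hDF : Differentiable ℝ (fderiv ℝ F) := (hf.fderiv_right le_rfl).differentiable one_ne_zero
  have h₁ : DifferentiableAt ℝ (fun z : ℝ × ℝ => pd₁ f z.1 z.2) (p, q) :=
    (contDiff_pd₁ (n := 1) hf).differentiable one_ne_zero _
  have h₂ : DifferentiableAt ℝ (fun z : ℝ × ℝ => pd₂ f z.1 z.2) (p, q) :=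
    (contDiff_pd₂ (n := 1) hf).differentiable one_ne_zero _
  rw [pd₂_eq_fderiv h₁, pd₁_eq_fderiv h₂]
  simp only [pd₁_eq_fderiv (hF _), pd₂_eq_fderiv (hF _)]
  rw [fderiv_clm_apply (hDF _) (differentiableAt_const _),
    fderiv_clm_apply (hDF _) (differentiableAt_const _)]
  simpa using (hf.contDiffAt.isSymmSndFDerivAt (by simp)) (0, 1) (1, 0)

theorem differentiableAt_slice₁ (hf : Differentiable ℝ (fun z : ℝ × ℝ => f z.1 z.2)) (p q : ℝ) :
    DifferentiableAt ℝ (fun x => f x q) p :=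
  (hf (p, q)).comp (f := fun x => (x, q)) p (by fun_prop)

theorem differentiableAt_slice₂ (hf : Differentiable ℝ (fun z : ℝ × ℝ => f z.1 z.2)) (p q : ℝ) :
    DifferentiableAt ℝ (fun y => f p y) q :=
  (hf (p, q)).comp (f := fun y => (p, y)) q (by fun_prop)

theorem pd₁_add (hf : Differentiable ℝ (fun z : ℝ × ℝ => f z.1 z.2))
    (hg : Differentiable ℝ (fun z : ℝ × ℝ => g z.1 z.2)) :
    pd₁ (fun p q => f p q + g p q) = fun p q => pd₁ f p q + pd₁ g p q :=
  funext₂ fun p q => deriv_add (differentiableAt_slice₁ hf p q) (differentiableAt_slice₁ hg p q)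

theorem pd₂_add (hf : Differentiable ℝ (fun z : ℝ × ℝ => f z.1 z.2))
    (hg : Differentiable ℝ (fun z : ℝ × ℝ => g z.1 z.2)) :
    pd₂ (fun p q => f p q + g p q) = fun p q => pd₂ f p q + pd₂ g p q :=
  funext₂ fun p q => deriv_add (differentiableAt_slice₂ hf p q) (differentiableAt_slice₂ hg p q)

theorem pd₁_mul (hf : Differentiable ℝ (fun z : ℝ × ℝ => f z.1 z.2))
    (hg : Differentiable ℝ (fun z : ℝ × ℝ => g z.1 z.2)) :
    pd₁ (fun p q => f p q * g p q) = fun p q => pd₁ f p q * g p q + f p q * pd₁ g p q :=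
  funext₂ fun p q => deriv_mul (differentiableAt_slice₁ hf p q) (differentiableAt_slice₁ hg p q)

theorem pd₂_mul (hf : Differentiable ℝ (fun z : ℝ × ℝ => f z.1 z.2))
    (hg : Differentiable ℝ (fun z : ℝ × ℝ => g z.1 z.2)) :
    pd₂ (fun p q => f p q * g p q) = fun p q => pd₂ f p q * g p q + f p q * pd₂ g p q :=
  funext₂ fun p q => deriv_mul (differentiableAt_slice₂ hf p q) (differentiableAt_slice₂ hg p q)

theorem pd₁_fst (c : ℝ → ℝ) : pd₁ (fun p _ => c p) = fun p _ => deriv c p := rfl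

theorem pd₂_snd (c : ℝ → ℝ) : pd₂ (fun _ q => c q) = fun _ q => deriv c q := rfl

theorem pd₁_snd (c : ℝ → ℝ) : pd₁ (fun _ q => c q) = fun _ _ => 0 :=
  funext₂ fun _ _ => deriv_const _ _

theorem pd₂_fst (c : ℝ → ℝ) : pd₂ (fun p _ => c p) = fun _ _ => 0 :=
  funext₂ fun _ _ => deriv_const _ _

end PartialDerivatives

noncomputable def legendreMinimalSurfaceOp (f : ℝ → ℝ → ℝ) : ℝ → ℝ → ℝ := fun p q =>
  (1 + p ^ 2) * pd₁ (pd₁ f) p q + 2 * p * q * pd₁ (pd₂ f) p q + (1 + q ^ 2) * pd₂ (pd₂ f) p q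

/-- The adjoint action of the rotation symmetry `x + u u_x` on contact symmetries `φ(u_x, u_y)`. -/
noncomputable def rotationRecursion (f : ℝ → ℝ → ℝ) : ℝ → ℝ → ℝ := fun p q =>
  -p * f p q + (1 + p ^ 2) * pd₁ f p q + p * q * pd₂ f p q

theorem legendreMinimalSurfaceOp_rotationRecursion {f : ℝ → ℝ → ℝ}
    (hf : ContDiff ℝ 3 (fun z : ℝ × ℝ => f z.1 z.2)) :
    legendreMinimalSurfaceOp (rotationRecursion f)
      = fun p q =>
          rotationRecursion (legendreMinimalSurfaceOp f) p q + 2 * p * legendreMinimalSurfaceOp f p q := by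
  have h₁ : ContDiff ℝ 2 (fun z : ℝ × ℝ => pd₁ f z.1 z.2) := contDiff_pd₁ hf
  have h₂ : ContDiff ℝ 2 (fun z : ℝ × ℝ => pd₂ f z.1 z.2) := contDiff_pd₂ hf
  -- the side conditions of the product and sum rules are discharged by `fun_prop` from these
  have d₀ : Differentiable ℝ (fun z : ℝ × ℝ => f z.1 z.2) := hf.differentiable (by norm_num)
  have d₁ := h₁.differentiable two_ne_zero
  have d₂ := h₂.differentiable two_ne_zero
  have d₁₁ := (contDiff_pd₁ (n := 1) h₁).differentiable one_ne_zero
  have d₁₂ := (contDiff_pd₁ (n := 1) h₂).differentiable one_ne_zero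
  have d₂₂ := (contDiff_pd₂ (n := 1) h₂).differentiable one_ne_zero
  unfold legendreMinimalSurfaceOp rotationRecursion
  funext p q
  -- `mul_assoc` keeps `p * q` from being eta-reduced to `HMul.hMul`, which the product rules
  -- could not split
  simp (disch := fun_prop) only [mul_assoc, pd₁_add, pd₂_add, pd₁_mul, pd₂_mul, pd₁_fst, pd₁_snd,
    pd₂_fst, pd₂_snd, deriv_id'', deriv_const', deriv_neg', deriv_fun_pow,
    pd₂_pd₁ (hf.of_le (by norm_num)), pd₂_pd₁ h₁, pd₂_pd₁ h₂]
  ring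

theorem recursion_preserves_solutions
    (φ : ℝ → ℝ → ℝ) (hφ : ContDiff ℝ 3 (fun z : ℝ × ℝ => φ z.1 z.2))
    (hsol : ∀ p q : ℝ,
      (1 + p ^ 2) * pd₁ (pd₁ φ) p q + 2 * p * q * pd₁ (pd₂ φ) p q
        + (1 + q ^ 2) * pd₂ (pd₂ φ) p q = 0) :
    ∀ p q : ℝ,
      (1 + p ^ 2) * pd₁ (pd₁ (fun p q => -p * φ p q + (1 + p ^ 2) * pd₁ φ p q + p * q * pd₂ φ p q)) p q
        + 2 * p * q * pd₁ (pd₂ (fun p q => -p * φ p q + (1 + p ^ 2) * pd₁ φ p q + p * q * pd₂ φ p q)) p q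
        + (1 + q ^ 2) * pd₂ (pd₂ (fun p q => -p * φ p q + (1 + p ^ 2) * pd₁ φ p q + p * q * pd₂ φ p q)) p q = 0 := by
  intro p q
  have hL : legendreMinimalSurfaceOp φ = fun _ _ => 0 := funext₂ hsol
  show legendreMinimalSurfaceOp (rotationRecursion φ) p q = 0
  rw [legendreMinimalSurfaceOp_rotationRecursion hφ, hL]
  simp [rotationRecursion, pd₁_snd, pd₂_snd]
end
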